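/- For all p, p⁺ ∈ 𝒫, all π̄, π̄⁺ ∈ E₁ and all p̄ ∈ E₂, setting p̄⁺ := p̄ + μ(p⁺−p̄): φ_π(p⁺,π̄⁺,p̄⁺) ≥ φ_π(p,π̄,p̄) + ((2−μ)r₂/(2μ))‖p̄⁺−p̄‖² + (r₁/2)⟨π̄⁺ + π̄ − 2π(p⁺,π̄⁺,p̄), π̄⁺−π̄⟩ + ⟨∇_pχ(π(p,π̄,p̄),p,π̄,p̄), p⁺−p⟩ − (L_{φπ}/2)‖p⁺−p‖². -/

import Mathlib

open scoped RealInnerProductSpace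

section Aux

variable {E : Type*} [NormedAddCommGroup E] [InnerProductSpace ℝ E] [CompleteSpace E]

lemma seg_mem {P : Set E} (hP : Convex ℝ P) {a b : E} (ha : a ∈ P) (hb : b ∈ P)
    {t : ℝ} (h0 : 0 ≤ t) (h1 : t ≤ 1) : a + t • (b - a) ∈ P := by
  have hx : a + t • (b - a) = (1 - t) • a + t • b := by module
  rw [hx]
  exact hP ha hb (by linarith) h0 (by ring)

lemma line_hasDerivAt (h : E → ℝ) (g : E → E) (hg : ∀ z, HasGradientAt h (g z) z)
    (x v : E) (t : ℝ) :
    HasDerivAt (fun s : ℝ => h (x + s • v)) ⟪g (x + t • v), v⟫ t := by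
  have hline : HasDerivAt (fun s : ℝ => x + s • v) v t := by
    simpa using ((hasDerivAt_id t).smul_const v).const_add x
  have := (hg (x + t • v)).hasFDerivAt.comp_hasDerivAt t hline
  simpa [InnerProductSpace.toDual_apply_apply, Function.comp_def] using this

lemma lower_quad (h : E → ℝ) (g : E → E) (hg : ∀ z, HasGradientAt h (g z) z)
    (K : ℝ) (x y : E)
    (hK : ∀ t ∈ Set.Icc (0:ℝ) 1, ‖g (x + t • (y - x)) - g x‖ ≤ K * (t * ‖y - x‖)) :
    h x + ⟪g x, y - x⟫ - K / 2 * ‖y - x‖ ^ 2 ≤ h y := by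
  set v := y - x with hv
  set u : ℝ → ℝ := fun t => h (x + t • v) - t * ⟪g x, v⟫ + K / 2 * t ^ 2 * ‖v‖ ^ 2 with hu
  have hderiv : ∀ t : ℝ, HasDerivAt u (⟪g (x + t • v) - g x, v⟫ + K * t * ‖v‖ ^ 2) t := by
    intro t
    have h1 := line_hasDerivAt h g hg x v t
    have h2 : HasDerivAt (fun s : ℝ => s * ⟪g x, v⟫) ⟪g x, v⟫ t := by
      simpa using (hasDerivAt_id t).mul_const ⟪g x, v⟫
    have h3 : HasDerivAt (fun s : ℝ => K / 2 * s ^ 2 * ‖v‖ ^ 2) (K * t * ‖v‖ ^ 2) t := by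
      have hp : HasDerivAt (fun s : ℝ => s ^ 2) (2 * t) t := by
        simpa using hasDerivAt_pow 2 t
      have := (hp.const_mul (K / 2)).mul_const (‖v‖ ^ 2)
      have e : K * t * ‖v‖ ^ 2 = K / 2 * (2 * t) * ‖v‖ ^ 2 := by ring
      rw [e]; exact this
    have := (h1.sub h2).add h3
    rw [inner_sub_left]
    exact this
  have mono : MonotoneOn u (Set.Icc (0:ℝ) 1) := by
    apply monotoneOn_of_deriv_nonneg (convex_Icc 0 1)
    · exact fun t _ => (hderiv t).continuousAt.continuousWithinAt
    · exact fun t _ => (hderiv t).differentiableAt.differentiableWithinAt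
    · intro t ht
      rw [interior_Icc] at ht
      rw [(hderiv t).deriv]
      have hn := hK t ⟨ht.1.le, ht.2.le⟩
      have habs := abs_real_inner_le_norm (g (x + t • v) - g x) v
      have h1 : -(‖g (x + t • v) - g x‖ * ‖v‖) ≤ ⟪g (x + t • v) - g x, v⟫ := by
        cases' abs_le.1 habs with hl hr
        linarith
      have h2 : ‖g (x + t • v) - g x‖ * ‖v‖ ≤ K * (t * ‖v‖) * ‖v‖ :=
        mul_le_mul_of_nonneg_right hn (norm_nonneg v)
      nlinarith [norm_nonneg v]
  have h01 := mono (Set.left_mem_Icc.2 zero_le_one) (Set.right_mem_Icc.2 zero_le_one) zero_le_one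
  have hu0 : u 0 = h x := by simp [hu]
  have hu1 : u 1 = h y - ⟪g x, v⟫ + K / 2 * ‖v‖ ^ 2 := by
    have hxy : x + v = y := by rw [hv]; abel
    simp [hu, hxy]
  rw [hu0, hu1] at h01
  linarith

lemma quad_growth {σ : ℝ} (hσ : 0 < σ) (P : Set E) (hPconv : Convex ℝ P)
    (c : E → ℝ) (G : E → E)
    (hsc : ∀ a ∈ P, ∀ b ∈ P, c a + ⟪G a, b - a⟫ + σ / 2 * ‖b - a‖ ^ 2 ≤ c b)
    (π₀ : E) (hπ₀ : π₀ ∈ P) (hmin : ∀ b ∈ P, c π₀ ≤ c b)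
    (π₁ : E) (hπ₁ : π₁ ∈ P) :
    c π₀ + σ / 2 * ‖π₁ - π₀‖ ^ 2 ≤ c π₁ := by
  set d := ‖π₁ - π₀‖ with hd
  have hd0 : 0 ≤ d := norm_nonneg _
  have key : ∀ t : ℝ, 0 < t → t ≤ 1 → c π₀ + σ / 2 * (1 - t) * d ^ 2 ≤ c π₁ := by
    intro t ht0 ht1
    set πt := π₀ + t • (π₁ - π₀) with hπt
    have hπtP : πt ∈ P := seg_mem hPconv hπ₀ hπ₁ ht0.le ht1
    have e1 : π₀ - πt = (-t) • (π₁ - π₀) := by rw [hπt]; module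
    have e2 : π₁ - πt = (1 - t) • (π₁ - π₀) := by rw [hπt]; module
    have hA := hsc πt hπtP π₀ hπ₀
    have hB := hsc πt hπtP π₁ hπ₁
    have hM := hmin πt hπtP
    rw [e1, real_inner_smul_right, norm_smul, Real.norm_eq_abs, abs_neg,
      abs_of_pos ht0] at hA
    rw [e2, real_inner_smul_right, norm_smul, Real.norm_eq_abs,
      abs_of_nonneg (by linarith : (0:ℝ) ≤ 1 - t)] at hB
    rw [mul_pow] at hA hB
    -- hA : c πt + -t * I + σ/2 * (t^2 * d^2) ≤ c π₀
    -- hB : c πt + (1-t) * I + σ/2 * ((1-t)^2 * d^2) ≤ c π₁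
    have hcomb : c πt + σ / 2 * (t * (1 - t)) * d ^ 2 ≤ (1 - t) * c π₀ + t * c π₁ := by
      nlinarith [mul_le_mul_of_nonneg_left hA (by linarith : (0:ℝ) ≤ 1 - t),
        mul_le_mul_of_nonneg_left hB ht0.le]
    have ht' : t * (c π₀ + σ / 2 * (1 - t) * d ^ 2) ≤ t * c π₁ := by nlinarith
    exact le_of_mul_le_mul_left ht' ht0
  clear_value d
  by_contra hcon
  push_neg at hcon
  obtain ⟨ε, hε⟩ : ∃ ε, ε = c π₀ + σ / 2 * d ^ 2 - c π₁ := ⟨_, rfl⟩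
  have hε0 : 0 < ε := by rw [hε]; linarith
  rcases eq_or_lt_of_le hd0 with hdz | hdpos
  · have := key 1 one_pos le_rfl
    simp at this
    rw [← hdz] at hcon
    simp at hcon
    linarith
  · obtain ⟨t, htdef⟩ : ∃ t, t = min 1 (ε / (σ * d ^ 2)) := ⟨_, rfl⟩
    have hden : 0 < σ * d ^ 2 := by positivity
    have ht0 : 0 < t := htdef ▸ lt_min one_pos (by positivity)
    have ht1 : t ≤ 1 := htdef ▸ min_le_left _ _
    have htle : t ≤ ε / (σ * d ^ 2) := htdef ▸ min_le_right _ _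
    have hh := key t ht0 ht1
    have hbound : σ / 2 * t * d ^ 2 ≤ ε / 2 := by
      have := mul_le_mul_of_nonneg_left htle (le_of_lt (by positivity : (0:ℝ) < σ * d ^ 2))
      rw [mul_div_cancel₀ _ (ne_of_gt hden)] at this
      have h2 : σ * d ^ 2 * t = 2 * (σ / 2 * t * d ^ 2) := by ring
      linarith
    have hexp : σ / 2 * (1 - t) * d ^ 2 = σ / 2 * d ^ 2 - σ / 2 * t * d ^ 2 := by ring
    linarith

end Aux

/-- The regularized function `χ(π,p,π̄,p̄) = f(π,p) + (r₁/2)‖π−π̄‖² − (r₂/2)‖p−p̄‖²`. -/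
noncomputable def chi {E₁ E₂ : Type*} [NormedAddCommGroup E₁] [NormedAddCommGroup E₂]
    (f : E₁ → E₂ → ℝ) (r₁ r₂ : ℝ) (π : E₁) (p : E₂) (πb : E₁) (pb : E₂) : ℝ :=
  f π p + r₁ / 2 * ‖π - πb‖ ^ 2 - r₂ / 2 * ‖p - pb‖ ^ 2

/-- one-step ascent estimate for the marginal function
`φ_π(p,π̄,p̄) = min_{π∈Π} χ(π,p,π̄,p̄)`. -/
theorem phi_pi_one_step_ascent
    {E₁ : Type*} [NormedAddCommGroup E₁] [InnerProductSpace ℝ E₁] [FiniteDimensional ℝ E₁]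
    {E₂ : Type*} [NormedAddCommGroup E₂] [InnerProductSpace ℝ E₂] [FiniteDimensional ℝ E₂]
    (P : Set E₁) (Q : Set E₂)
    (hPne : P.Nonempty) (hPcpt : IsCompact P) (hPconv : Convex ℝ P)
    (hQne : Q.Nonempty) (hQcpt : IsCompact Q) (hQconv : Convex ℝ Q)
    (f : E₁ → E₂ → ℝ) (hf : ContDiff ℝ 1 (fun q : E₁ × E₂ => f q.1 q.2))
    (gπ : E₁ → E₂ → E₁) (gp : E₁ → E₂ → E₂)
    (hgπ : ∀ π p, HasGradientAt (fun π' => f π' p) (gπ π p) π)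
    (hgp : ∀ π p, HasGradientAt (fun p' => f π p') (gp π p) p)
    (ℓ₁ ℓ₂ : ℝ) (hℓ₁ : 0 < ℓ₁) (hℓ₂ : 0 < ℓ₂)
    (hlipπ : ∀ π ∈ P, ∀ π' ∈ P, ∀ p ∈ Q, ∀ p' ∈ Q,
      ‖gπ π p - gπ π' p'‖ ≤ ℓ₁ * (‖π - π'‖ + ‖p - p'‖))
    (hlipp : ∀ π ∈ P, ∀ π' ∈ P, ∀ p ∈ Q, ∀ p' ∈ Q,
      ‖gp π p - gp π' p'‖ ≤ ℓ₂ * (‖π - π'‖ + ‖p - p'‖))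
    (r₁ r₂ : ℝ) (hr₁ : ℓ₁ < r₁) (hr₂ : 0 < r₂)
    (μ : ℝ) (hμ : 0 < μ) (hμ1 : μ < 1)
    -- `πsel p π̄ p̄` is the unique minimizer of `π ↦ χ(π,p,π̄,p̄)` over `Π`,
    -- so `φ_π(p,π̄,p̄) = χ(πsel p π̄ p̄, p, π̄, p̄)`
    (πsel : E₂ → E₁ → E₂ → E₁)
    (hπsel : ∀ p ∈ Q, ∀ (πb : E₁) (pb : E₂), πsel p πb pb ∈ P ∧
      ∀ π' ∈ P, chi f r₁ r₂ (πsel p πb pb) p πb pb ≤ chi f r₁ r₂ π' p πb pb) :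
    ∀ p ∈ Q, ∀ pp ∈ Q, ∀ (πb πbp : E₁) (pb pbp : E₂),
      pbp = pb + μ • (pp - pb) →
      chi f r₁ r₂ (πsel pp πbp pbp) pp πbp pbp ≥
        chi f r₁ r₂ (πsel p πb pb) p πb pb +
          (2 - μ) * r₂ / (2 * μ) * ‖pbp - pb‖ ^ 2 +
          r₁ / 2 * ⟪πbp + πb - (2 : ℝ) • πsel pp πbp pb, πbp - πb⟫ +
          ⟪gp (πsel p πb pb) p - r₂ • (p - pb), pp - p⟫ -
          (ℓ₂ * (ℓ₂ / (r₁ - ℓ₁) + 1) + ℓ₂ + r₂) / 2 * ‖pp - p‖ ^ 2 := by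
  intro p hp pp hpp πb πbp pb pbp hpbp
  obtain ⟨hπ₀P, hπ₀min⟩ := hπsel p hp πb pb
  obtain ⟨hπ₁P, hπ₁min⟩ := hπsel pp hpp πb pb
  obtain ⟨hπ₂P, hπ₂min⟩ := hπsel pp hpp πbp pb
  obtain ⟨hπ₃P, hπ₃min⟩ := hπsel pp hpp πbp pbp
  set π₀ := πsel p πb pb with hπ₀def
  set π₁ := πsel pp πb pb with hπ₁def
  set π₂ := πsel pp πbp pb with hπ₂def
  set π₃ := πsel pp πbp pbp with hπ₃def
  set σ := r₁ - ℓ₁ with hσdef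
  have hσ : 0 < σ := by rw [hσdef]; linarith
  -- Step 1 : change of pb
  have e_pbp : pp - pbp = (1 - μ) • (pp - pb) := by rw [hpbp]; module
  have e_pb : pbp - pb = μ • (pp - pb) := by rw [hpbp]; module
  have n_pbp : ‖pp - pbp‖ ^ 2 = (1 - μ) ^ 2 * ‖pp - pb‖ ^ 2 := by
    rw [e_pbp, norm_smul, mul_pow, Real.norm_eq_abs, sq_abs]
  have n_pb : ‖pbp - pb‖ ^ 2 = μ ^ 2 * ‖pp - pb‖ ^ 2 := by
    rw [e_pb, norm_smul, mul_pow, Real.norm_eq_abs, sq_abs]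
  have step1 : chi f r₁ r₂ π₃ pp πbp pbp ≥
      chi f r₁ r₂ π₂ pp πbp pb + (2 - μ) * r₂ / (2 * μ) * ‖pbp - pb‖ ^ 2 := by
    have h1 : chi f r₁ r₂ π₃ pp πbp pbp =
        chi f r₁ r₂ π₃ pp πbp pb + r₂ / 2 * (‖pp - pb‖ ^ 2 - ‖pp - pbp‖ ^ 2) := by
      unfold chi; ring
    have h2 := hπ₂min π₃ hπ₃P
    have h3 : (2 - μ) * r₂ / (2 * μ) * ‖pbp - pb‖ ^ 2 =
        r₂ / 2 * (‖pp - pb‖ ^ 2 - ‖pp - pbp‖ ^ 2) := by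
      rw [n_pb, n_pbp]
      field_simp
      ring
    linarith
  -- Step 2 : change of πb
  have step2 : chi f r₁ r₂ π₂ pp πbp pb ≥
      chi f r₁ r₂ π₁ pp πb pb + r₁ / 2 * ⟪πbp + πb - (2 : ℝ) • π₂, πbp - πb⟫ := by
    have h1 : chi f r₁ r₂ π₂ pp πbp pb =
        chi f r₁ r₂ π₂ pp πb pb + r₁ / 2 * (‖π₂ - πbp‖ ^ 2 - ‖π₂ - πb‖ ^ 2) := by
      unfold chi; ring
    have h2 := hπ₁min π₂ hπ₂P
    have h3 : ‖π₂ - πbp‖ ^ 2 - ‖π₂ - πb‖ ^ 2 = ⟪πbp + πb - (2 : ℝ) • π₂, πbp - πb⟫ := by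
      have e1 : πbp + πb - (2 : ℝ) • π₂ = -((π₂ - πbp) + (π₂ - πb)) := by module
      have e2 : πbp - πb = -((π₂ - πbp) - (π₂ - πb)) := by module
      rw [e1, e2, inner_neg_neg, inner_add_left (π₂ - πbp) (π₂ - πb) ((π₂ - πbp) - (π₂ - πb)),
        inner_sub_right (π₂ - πbp) (π₂ - πbp) (π₂ - πb),
        inner_sub_right (π₂ - πb) (π₂ - πbp) (π₂ - πb),
        real_inner_self_eq_norm_sq, real_inner_self_eq_norm_sq,
        real_inner_comm (π₂ - πb) (π₂ - πbp)]
      ring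
    rw [h3] at h1
    linarith
  -- Step 3 : change of p
  have hsc : ∀ a ∈ P, ∀ b ∈ P, chi f r₁ r₂ a p πb pb +
      ⟪gπ a p + r₁ • (a - πb), b - a⟫ + σ / 2 * ‖b - a‖ ^ 2 ≤ chi f r₁ r₂ b p πb pb := by
    intro a ha b hb
    have hf_low : f a p + ⟪gπ a p, b - a⟫ - ℓ₁ / 2 * ‖b - a‖ ^ 2 ≤ f b p := by
      apply lower_quad (fun π => f π p) (fun π => gπ π p) (fun z => hgπ z p) ℓ₁ a b
      intro t ht
      have hmem : a + t • (b - a) ∈ P := seg_mem hPconv ha hb ht.1 ht.2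
      have hl := hlipπ (a + t • (b - a)) hmem a ha p hp p hp
      have heq : a + t • (b - a) - a = t • (b - a) := by abel
      rw [heq, norm_smul, Real.norm_eq_abs, abs_of_nonneg ht.1] at hl
      simpa using hl
    have hq : r₁ / 2 * ‖b - πb‖ ^ 2 =
        r₁ / 2 * ‖a - πb‖ ^ 2 + r₁ * ⟪a - πb, b - a⟫ + r₁ / 2 * ‖b - a‖ ^ 2 := by
      have e : b - πb = (a - πb) + (b - a) := by abel
      rw [e, norm_add_sq_real]; ring
    have hGi : ⟪gπ a p + r₁ • (a - πb), b - a⟫ =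
        ⟪gπ a p, b - a⟫ + r₁ * ⟪a - πb, b - a⟫ := by
      rw [inner_add_left, real_inner_smul_left]
    unfold chi
    rw [hGi]
    have hσe : σ / 2 * ‖b - a‖ ^ 2 = r₁ / 2 * ‖b - a‖ ^ 2 - ℓ₁ / 2 * ‖b - a‖ ^ 2 := by
      rw [hσdef]; ring
    linarith
  have hqg : chi f r₁ r₂ π₀ p πb pb + σ / 2 * ‖π₁ - π₀‖ ^ 2 ≤ chi f r₁ r₂ π₁ p πb pb :=
    quad_growth hσ P hPconv (fun π => chi f r₁ r₂ π p πb pb)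
      (fun π => gπ π p + r₁ • (π - πb)) hsc π₀ hπ₀P hπ₀min π₁ hπ₁P
  have hf_low_p : f π₁ p + ⟪gp π₁ p, pp - p⟫ - ℓ₂ / 2 * ‖pp - p‖ ^ 2 ≤ f π₁ pp := by
    apply lower_quad (fun q => f π₁ q) (gp π₁) (hgp π₁) ℓ₂ p pp
    intro t ht
    have hmem : p + t • (pp - p) ∈ Q := seg_mem hQconv hp hpp ht.1 ht.2
    have hl := hlipp π₁ hπ₁P π₁ hπ₁P (p + t • (pp - p)) hmem p hp
    have heq : p + t • (pp - p) - p = t • (pp - p) := by abel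
    rw [heq, norm_smul, Real.norm_eq_abs, abs_of_nonneg ht.1] at hl
    simpa using hl
  have hcross : ‖gp π₁ p - gp π₀ p‖ ≤ ℓ₂ * ‖π₁ - π₀‖ := by
    have := hlipp π₁ hπ₁P π₀ hπ₀P p hp p hp
    simpa using this
  have hip : ⟪gp π₀ p, pp - p⟫ - ℓ₂ * ‖π₁ - π₀‖ * ‖pp - p‖ ≤ ⟪gp π₁ p, pp - p⟫ := by
    have habs := abs_real_inner_le_norm (gp π₁ p - gp π₀ p) (pp - p)
    have h1 : -(‖gp π₁ p - gp π₀ p‖ * ‖pp - p‖) ≤ ⟪gp π₁ p - gp π₀ p, pp - p⟫ := by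
      cases' abs_le.1 habs with hl hr
      linarith
    have h2 : ‖gp π₁ p - gp π₀ p‖ * ‖pp - p‖ ≤ ℓ₂ * ‖π₁ - π₀‖ * ‖pp - p‖ :=
      mul_le_mul_of_nonneg_right hcross (norm_nonneg _)
    rw [inner_sub_left] at h1
    linarith
  have hr2alg : r₂ / 2 * ‖pp - pb‖ ^ 2 =
      r₂ / 2 * ‖p - pb‖ ^ 2 + r₂ * ⟪p - pb, pp - p⟫ + r₂ / 2 * ‖pp - p‖ ^ 2 := by
    have e : pp - pb = (p - pb) + (pp - p) := by abel
    rw [e, norm_add_sq_real]; ring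
  have hGexp : ⟪gp π₀ p - r₂ • (p - pb), pp - p⟫ =
      ⟪gp π₀ p, pp - p⟫ - r₂ * ⟪p - pb, pp - p⟫ := by
    rw [inner_sub_left, real_inner_smul_left]
  have hamgm : 0 ≤ σ / 2 * ‖π₁ - π₀‖ ^ 2 - ℓ₂ * ‖π₁ - π₀‖ * ‖pp - p‖
      + ℓ₂ ^ 2 / (2 * σ) * ‖pp - p‖ ^ 2 := by
    have key : σ / 2 * ‖π₁ - π₀‖ ^ 2 - ℓ₂ * ‖π₁ - π₀‖ * ‖pp - p‖
        + ℓ₂ ^ 2 / (2 * σ) * ‖pp - p‖ ^ 2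
        = (σ * ‖π₁ - π₀‖ - ℓ₂ * ‖pp - p‖) ^ 2 / (2 * σ) := by
      field_simp
      ring
    rw [key]
    positivity
  have hLexp : (ℓ₂ * (ℓ₂ / (r₁ - ℓ₁) + 1) + ℓ₂ + r₂) / 2 * ‖pp - p‖ ^ 2 =
      ℓ₂ ^ 2 / (2 * σ) * ‖pp - p‖ ^ 2 + ℓ₂ * ‖pp - p‖ ^ 2 + r₂ / 2 * ‖pp - p‖ ^ 2 := by
    rw [← hσdef]
    field_simp
    ring
  have hslack : 0 ≤ ℓ₂ / 2 * ‖pp - p‖ ^ 2 := by positivity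
  have step3 : chi f r₁ r₂ π₁ pp πb pb ≥
      chi f r₁ r₂ π₀ p πb pb + ⟪gp π₀ p - r₂ • (p - pb), pp - p⟫ -
        (ℓ₂ * (ℓ₂ / (r₁ - ℓ₁) + 1) + ℓ₂ + r₂) / 2 * ‖pp - p‖ ^ 2 := by
    have hc1 : chi f r₁ r₂ π₁ pp πb pb =
        chi f r₁ r₂ π₁ p πb pb + (f π₁ pp - f π₁ p)
          - (r₂ / 2 * ‖pp - pb‖ ^ 2 - r₂ / 2 * ‖p - pb‖ ^ 2) := by
      unfold chi; ring
    linarith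
  linarith [step1, step2, step3]
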